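/- Let X be an integrable real random variable on a probability space with law P, let q ∈ (0,1) and λ > 0, and let t be a real with P(X > t) > 0 and P(X ≤ t) > 0. Let μ⁺ = E[X | X > t] and μ⁻ = E[X | X ≤ t] and suppose μ⁻ < t < μ⁺. Let c = ( q/(μ⁺ − t) + (1−q)/(t − μ⁻) )⁻¹ and define D(X) = λ·c·(q/(μ⁺ − t))·(X − t) on {X > t}, D(X) = −λ·c·((1−q)/(t − μ⁻))·(t − X) on {X ≤ t}. If P(X ≤ t) = q, then E[D(X)] = 0; if P(X ≤ t) < q then E[D(X)] > 0; and if P(X ≤ t) > q then E[D(X)] < 0. -/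

import Mathlib

open MeasureTheory

/-! The increment is `a (X - t)` above `t` and `b (X - t)` below, so its mean is
`a (μ⁺ - t) P(X > t) + b (μ⁻ - t) P(X ≤ t)`. The weights `a ∝ q / (μ⁺ - t)` and
`b ∝ (1 - q) / (t - μ⁻)` cancel the distances to the conditional means, leaving
`λ c (q P(X > t) - (1 - q) P(X ≤ t)) = λ c (q - P(X ≤ t))`, whose sign is that of
`q - P(X ≤ t)` because `c > 0`. -/

section

variable {α E : Type*} [MeasurableSpace α] [NormedAddCommGroup E] [NormedSpace ℝ E]
  {μ : Measure α} {s : Set α} {f g : α → E}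

theorem integral_piecewise₀ [DecidablePred (· ∈ s)] (hs : NullMeasurableSet s μ)
    (hf : IntegrableOn f s μ) (hg : IntegrableOn g sᶜ μ) :
    ∫ x, s.piecewise f g x ∂μ = ∫ x in s, f x ∂μ + ∫ x in sᶜ, g x ∂μ := by
  rw [← Set.indicator_add_compl_eq_piecewise,
    integral_add' (hf.integrable_indicator₀ hs) (hg.integrable_indicator₀ hs.compl),
    integral_indicator₀ hs, integral_indicator₀ hs.compl]

end

section

variable {Ω : Type*} [MeasurableSpace Ω] {P : Measure Ω} {X : Ω → ℝ}

-- Holds even when `P s = 0`, where both sides vanish despite the junk division.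
theorem setIntegral_sub_const_eq_mul_measureReal [IsFiniteMeasure P] (hX : Integrable X P)
    (s : Set Ω) (t : ℝ) :
    ∫ ω in s, (X ω - t) ∂P = ((∫ ω in s, X ω ∂P) / P.real s - t) * P.real s := by
  rw [integral_sub hX.integrableOn (integrableOn_const), setIntegral_const, smul_eq_mul]
  rcases eq_or_ne (P.real s) 0 with hs | hs
  · rw [hs, setIntegral_measure_zero _ ((measureReal_eq_zero_iff).1 hs)]
    simp
  · field_simp

theorem integral_ite_lt_mul_sub [IsFiniteMeasure P] (hX : Integrable X P) (a b t : ℝ) :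
    ∫ ω, (if t < X ω then a * (X ω - t) else b * (X ω - t)) ∂P
      = a * ∫ ω in {ω | t < X ω}, (X ω - t) ∂P
        + b * ∫ ω in {ω | X ω ≤ t}, (X ω - t) ∂P := by
  have hs : NullMeasurableSet {ω | t < X ω} P :=
    nullMeasurableSet_lt aemeasurable_const hX.aemeasurable
  have hXt : Integrable (fun ω => X ω - t) P := hX.sub (integrable_const t)
  have hsplit := integral_piecewise₀ hs (hXt.const_mul a).integrableOn
    (hXt.const_mul b).integrableOn
  simp only [Set.compl_ofPred, not_lt] at hsplit
  rw [integral_const_mul, integral_const_mul] at hsplit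
  exact hsplit

theorem integral_qewa_increment [IsProbabilityMeasure P] (hX : Integrable X P)
    {t q lam μp μm c : ℝ}
    (hμp : μp = (∫ ω in {ω | t < X ω}, X ω ∂P) / (P {ω | t < X ω}).toReal)
    (hμm : μm = (∫ ω in {ω | X ω ≤ t}, X ω ∂P) / (P {ω | X ω ≤ t}).toReal)
    (hp : μp ≠ t) (hm : μm ≠ t) :
    ∫ ω, (if t < X ω then lam * c * (q / (μp - t)) * (X ω - t)
          else -(lam * c * ((1 - q) / (t - μm)) * (t - X ω))) ∂P
      = lam * c * (q - (P {ω | X ω ≤ t}).toReal) := by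
  have hle : NullMeasurableSet {ω | X ω ≤ t} P :=
    nullMeasurableSet_le hX.aemeasurable aemeasurable_const
  have hgt : P.real {ω | t < X ω} = 1 - P.real {ω | X ω ≤ t} := by
    rw [← probReal_compl_eq_one_sub₀ hle, Set.compl_ofPred]
    simp only [not_le]
  simp_rw [← mul_neg, neg_sub]
  rw [integral_ite_lt_mul_sub hX, setIntegral_sub_const_eq_mul_measureReal hX,
    setIntegral_sub_const_eq_mul_measureReal hX]
  simp only [measureReal_def] at hgt ⊢
  rw [← hμp, ← hμm, hgt]
  have hp' : μp - t ≠ 0 := sub_ne_zero.2 hp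
  have hm' : t - μm ≠ 0 := sub_ne_zero.2 hm.symm
  field_simp
  ring

end

theorem qewa_expected_increment_sign_general {Ω : Type*} [MeasurableSpace Ω]
    (P : Measure Ω) [IsProbabilityMeasure P]
    (X : Ω → ℝ) (hX : Integrable X P)
    (t q lam μp μm c : ℝ) (hq0 : 0 < q) (hq1 : q < 1) (hlam : 0 < lam)
    (hμp : μp = (∫ ω in {ω | t < X ω}, X ω ∂P) / (P {ω | t < X ω}).toReal)
    (hμm : μm = (∫ ω in {ω | X ω ≤ t}, X ω ∂P) / (P {ω | X ω ≤ t}).toReal)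
    (h1 : μm < t) (h2 : t < μp)
    (hc : c = (q / (μp - t) + (1 - q) / (t - μm))⁻¹) :
    ((P {ω | X ω ≤ t}).toReal = q →
        ∫ ω, (if t < X ω then lam * c * (q / (μp - t)) * (X ω - t)
              else -(lam * c * ((1 - q) / (t - μm)) * (t - X ω))) ∂P = 0) ∧
    ((P {ω | X ω ≤ t}).toReal < q →
        0 < ∫ ω, (if t < X ω then lam * c * (q / (μp - t)) * (X ω - t)
              else -(lam * c * ((1 - q) / (t - μm)) * (t - X ω))) ∂P) ∧
    (q < (P {ω | X ω ≤ t}).toReal →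
        ∫ ω, (if t < X ω then lam * c * (q / (μp - t)) * (X ω - t)
              else -(lam * c * ((1 - q) / (t - μm)) * (t - X ω))) ∂P < 0) := by
  rw [integral_qewa_increment hX hμp hμm h2.ne' h1.ne]
  have hc0 : 0 < c := by
    have := sub_pos.2 h1
    have := sub_pos.2 h2
    have := sub_pos.2 hq1
    rw [hc]
    positivity
  have hlc : 0 < lam * c := mul_pos hlam hc0
  refine ⟨fun h => by rw [h, sub_self, mul_zero], fun h => ?_, fun h => ?_⟩
  · exact mul_pos hlc (sub_pos.2 h)
  · exact mul_neg_of_pos_of_neg hlc (sub_neg.2 h)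

/-- Sign of the expected QEWA increment: it vanishes exactly at the
`q`-quantile (`P(X ≤ t) = q`), is positive when `P(X ≤ t) < q`, and negative
when `P(X ≤ t) > q`. -/
theorem qewa_expected_increment_sign {Ω : Type*} [MeasurableSpace Ω]
    (P : Measure Ω) [IsProbabilityMeasure P]
    (X : Ω → ℝ) (hXm : Measurable X) (hX : Integrable X P)
    (t q lam μp μm c : ℝ) (hq0 : 0 < q) (hq1 : q < 1) (hlam : 0 < lam)
    (hgt : 0 < P {ω | t < X ω}) (hle : 0 < P {ω | X ω ≤ t})
    (hμp : μp = (∫ ω in {ω | t < X ω}, X ω ∂P) / (P {ω | t < X ω}).toReal)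
    (hμm : μm = (∫ ω in {ω | X ω ≤ t}, X ω ∂P) / (P {ω | X ω ≤ t}).toReal)
    (h1 : μm < t) (h2 : t < μp)
    (hc : c = (q / (μp - t) + (1 - q) / (t - μm))⁻¹) :
    ((P {ω | X ω ≤ t}).toReal = q →
        ∫ ω, (if t < X ω then lam * c * (q / (μp - t)) * (X ω - t)
              else -(lam * c * ((1 - q) / (t - μm)) * (t - X ω))) ∂P = 0) ∧
    ((P {ω | X ω ≤ t}).toReal < q →
        0 < ∫ ω, (if t < X ω then lam * c * (q / (μp - t)) * (X ω - t)
              else -(lam * c * ((1 - q) / (t - μm)) * (t - X ω))) ∂P) ∧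
    (q < (P {ω | X ω ≤ t}).toReal →
        ∫ ω, (if t < X ω then lam * c * (q / (μp - t)) * (X ω - t)
              else -(lam * c * ((1 - q) / (t - μm)) * (t - X ω))) ∂P < 0) :=
  qewa_expected_increment_sign_general P X hX t q lam μp μm c hq0 hq1 hlam hμp hμm h1 h2 hc
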